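/- arXiv:1503.00895 — 5 statements merged into one kernel-verified Lean document; each statement's English description precedes it below -/
import Mathlib

section
/- Let n and n+p be relatively prime positive integers and t_k = kπ/(n(n+p)) for 0 ≤ k ≤ n(n+p). For integers i, j ≥ 0 with i/(n+p) + j/n < 1, setting k = in + j(n+p) and k' = |in − j(n+p)|, one has γ(t_k) = γ(t_{k'}), where γ(t) = (cos(nt), cos((n+p)t)). -/
/-!
With `a = n`, `b = n + p` and `t = (i a ± j b) π / (ab)`, one has `a t = i π a / b ± j π` and
`b t = ±(j π b / a ± i π)`. Since `cos (x + m π) = (-1)^m cos x = cos (x - m π)` for integers `m`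
and cosine is even, both signs give the same point; evenness of the curve then replaces
`i a - j b` by its absolute value.
-/

open Real

noncomputable def lissajous (a b t : ℝ) : ℝ × ℝ := (cos (a * t), cos (b * t))

theorem lissajous_neg (a b t : ℝ) : lissajous a b (-t) = lissajous a b t := by
  simp only [lissajous, mul_neg, cos_neg]

theorem lissajous_abs (a b t : ℝ) : lissajous a b |t| = lissajous a b t := by
  rcases abs_choice t with h | h <;> rw [h]
  exact lissajous_neg a b t

theorem cos_add_int_mul_pi_eq_cos_sub (x : ℝ) (m : ℤ) : cos (x + m * π) = cos (x - m * π) := by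
  rw [cos_add_int_mul_pi, cos_sub_int_mul_pi]

theorem lissajous_node {a b : ℝ} (ha : a ≠ 0) (hb : b ≠ 0) (i j : ℤ) :
    lissajous a b ((i * a + j * b) * π / (a * b)) =
      lissajous a b ((i * a - j * b) * π / (a * b)) := by
  have h₁ : a * ((i * a + j * b) * π / (a * b)) = i * π * a / b + j * π := by field_simp
  have h₂ : a * ((i * a - j * b) * π / (a * b)) = i * π * a / b - j * π := by field_simp
  have h₃ : b * ((i * a + j * b) * π / (a * b)) = j * π * b / a + i * π := by field_simp; ring
  have h₄ : b * ((i * a - j * b) * π / (a * b)) = -(j * π * b / a - i * π) := by field_simp; ring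
  rw [lissajous, lissajous, h₁, h₂, h₃, h₄, cos_neg, cos_add_int_mul_pi_eq_cos_sub,
    cos_add_int_mul_pi_eq_cos_sub]

theorem lissajous_selfintersection_nodes_general (n p : ℕ) (hn : 0 < n)
    (γ : ℝ → ℝ × ℝ)
    (hγ : ∀ t, γ t = (Real.cos (n * t), Real.cos ((n + p) * t)))
    (tk : ℕ → ℝ) (htk : ∀ k, tk k = k * π / (n * (n + p)))
    (i j : ℕ) :
    γ (tk (i * n + j * (n + p))) = γ (tk ((i * n : ℤ) - j * (n + p)).natAbs) := by
  have ha : (n : ℝ) ≠ 0 := by positivity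
  have hb : (n + p : ℝ) ≠ 0 := by positivity
  have hγ_eq : γ = lissajous n (n + p) := funext hγ
  have hk' : tk ((i * n : ℤ) - j * (n + p)).natAbs =
      |((i * n - j * (n + p) : ℤ) : ℝ) * π / (n * (n + p))| := by
    rw [htk, Nat.cast_natAbs, Int.cast_abs, abs_div, abs_mul, abs_of_pos pi_pos,
      abs_of_pos (by positivity : (0 : ℝ) < n * (n + p))]
  rw [hγ_eq, hk', lissajous_abs, htk]
  push_cast
  exact lissajous_node ha hb i j

theorem lissajous_selfintersection_nodes (n p : ℕ) (hn : 0 < n) (hp : 0 < p)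
    (hcop : Nat.Coprime n (n + p))
    (γ : ℝ → ℝ × ℝ)
    (hγ : ∀ t, γ t = (Real.cos (n * t), Real.cos ((n + p) * t)))
    (tk : ℕ → ℝ) (htk : ∀ k, tk k = k * π / (n * (n + p)))
    (i j : ℕ) (hij : (i : ℝ) / (n + p) + (j : ℝ) / n < 1) :
    γ (tk (i * n + j * (n + p))) = γ (tk ((i * n : ℤ) - j * (n + p)).natAbs) :=
  lissajous_selfintersection_nodes_general n p hn γ hγ tk htk i j
end

section
/- Let n and n+p be relatively prime positive integers. The set of points γ(t_k) for k = 0, …, n(n+p), where γ(t) = (cos(nt), cos((n+p)t)) and t_k = kπ/(n(n+p)), equals the set of points (cos(iπ/(n+p)), cos(jπ/n)) with 0 ≤ i ≤ n+p, 0 ≤ j ≤ n, and i + j even. -/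
open Real

/-!
Writing `m = n + p`, the node `γ (t_k)` is `(cos (kπ/m), cos (kπ/n))`, and `cos (kπ/m)` only
depends on `k` up to sign modulo `2m`. Folding `k` into `[0, m]` and into `[0, n]` this way gives
grid indices `i`, `j` that both have the parity of `k`. Conversely, when `i + j` is even the Chinese
remainder theorem for the moduli `2m` and `2n`, whose gcd is `2`, gives an `x` with `x ≡ i` and
`x ≡ j`, and folding `x` into `[0, nm]` up to sign modulo `2nm` yields the index `k`.
-/

def Int.ModEqUpToSign (n a b : ℤ) : Prop :=
  a ≡ b [ZMOD n] ∨ a ≡ -b [ZMOD n]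

namespace Int.ModEqUpToSign

variable {d n a b : ℤ}

theorem of_dvd (hd : d ∣ n) (h : ModEqUpToSign n a b) : ModEqUpToSign d a b :=
  h.imp (Int.ModEq.of_dvd hd) (Int.ModEq.of_dvd hd)

theorem modEq_two {m : ℤ} (h : ModEqUpToSign (2 * m) a b) : a ≡ b [ZMOD 2] := by
  rcases h.of_dvd (dvd_mul_right 2 m) with h | h <;> unfold Int.ModEq at * <;> omega

end Int.ModEqUpToSign

theorem Int.exists_le_modEqUpToSign {m : ℕ} (hm : 0 < m) (k : ℤ) :
    ∃ i : ℕ, i ≤ m ∧ ModEqUpToSign (2 * m) i k := by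
  have h2m : (0 : ℤ) < 2 * m := by positivity
  have hr : k % (2 * m) ≡ k [ZMOD 2 * m] := Int.mod_modEq k _
  have hr₀ := Int.emod_nonneg k h2m.ne'
  have hr₁ := Int.emod_lt_of_pos k h2m
  by_cases hle : k % (2 * m) ≤ m
  · exact ⟨(k % (2 * m)).toNat, by omega, Or.inl (by rwa [Int.toNat_of_nonneg hr₀])⟩
  · refine ⟨(2 * m - k % (2 * m)).toNat, by omega, Or.inr ?_⟩
    rw [Int.toNat_of_nonneg (by omega)]
    calc 2 * (m : ℤ) - k % (2 * m) ≡ 0 - k % (2 * m) [ZMOD 2 * m] :=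
          (Int.modEq_zero_iff_dvd.mpr dvd_rfl).sub_right _
      _ ≡ -k [ZMOD 2 * m] := by rw [zero_sub]; exact hr.neg

theorem Int.exists_modEq_mul_and_modEq_mul {d m n a b : ℤ} (hmn : IsCoprime m n)
    (hab : a ≡ b [ZMOD d]) : ∃ x, x ≡ a [ZMOD d * m] ∧ x ≡ b [ZMOD d * n] := by
  obtain ⟨u, v, huv⟩ := hmn
  obtain ⟨e, he⟩ := Int.modEq_iff_dvd.mp hab
  refine ⟨a + d * m * u * e, Int.modEq_iff_dvd.mpr ⟨-(u * e), by ring⟩,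
    Int.modEq_iff_dvd.mpr ⟨e * v, by linear_combination he - d * e * huv⟩⟩

theorem Real.cos_mul_pi_div_eq_of_modEq {m : ℕ} {a b : ℤ} (h : a ≡ b [ZMOD 2 * m]) :
    cos (a * π / m) = cos (b * π / m) := by
  rcases eq_or_ne m 0 with rfl | hm
  · simp -- both sides are `cos 0`, since `x / 0 = 0`
  obtain ⟨q, hq⟩ := Int.modEq_iff_dvd.mp h
  have hb : (b : ℝ) * π / m = a * π / m + q * (2 * π) := by
    rw [show (b : ℝ) = a + 2 * m * q by exact_mod_cast (by linarith : b = a + 2 * m * q)]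
    field_simp
  rw [hb, (cos_periodic.int_mul q) _]

theorem Int.ModEqUpToSign.cos_mul_pi_div_eq {m : ℕ} {a b : ℤ}
    (h : ModEqUpToSign (2 * m) a b) : cos (a * π / m) = cos (b * π / m) := by
  rcases h with h | h
  · exact cos_mul_pi_div_eq_of_modEq h
  · rw [cos_mul_pi_div_eq_of_modEq h, cast_neg, neg_mul, neg_div, cos_neg]

theorem exists_even_add_cos_mul_pi_div_eq {m n : ℕ} (hm : 0 < m) (hn : 0 < n) (k : ℕ) :
    ∃ i ≤ m, ∃ j ≤ n, Even (i + j) ∧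
      cos (k * π / m) = cos (i * π / m) ∧ cos (k * π / n) = cos (j * π / n) := by
  obtain ⟨i, hi, hik⟩ := Int.exists_le_modEqUpToSign hm k
  obtain ⟨j, hj, hjk⟩ := Int.exists_le_modEqUpToSign hn k
  have hik₂ := hik.modEq_two
  have hjk₂ := hjk.modEq_two
  refine ⟨i, hi, j, hj, Nat.even_iff.mpr (by unfold Int.ModEq at *; omega), ?_, ?_⟩
  · simpa using hik.cos_mul_pi_div_eq.symm
  · simpa using hjk.cos_mul_pi_div_eq.symm

theorem exists_le_mul_cos_mul_pi_div_eq_of_even_add {m n i j : ℕ} (hmn : Nat.Coprime m n)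
    (hm : 0 < m) (hn : 0 < n) (hij : Even (i + j)) :
    ∃ k ≤ n * m, cos (k * π / m) = cos (i * π / m) ∧ cos (k * π / n) = cos (j * π / n) := by
  have hij₂ : (i : ℤ) ≡ j [ZMOD 2] := by
    have := Nat.even_iff.mp hij
    unfold Int.ModEq
    omega
  obtain ⟨x, hxi, hxj⟩ :=
    Int.exists_modEq_mul_and_modEq_mul (Nat.isCoprime_iff_coprime.mpr hmn) hij₂
  obtain ⟨k, hk, hkx⟩ := Int.exists_le_modEqUpToSign (m := n * m) (by positivity) x
  have hdvd_m : 2 * (m : ℤ) ∣ 2 * ((n * m : ℕ) : ℤ) :=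
    mul_dvd_mul_left 2 (by exact_mod_cast dvd_mul_left m n)
  have hdvd_n : 2 * (n : ℤ) ∣ 2 * ((n * m : ℕ) : ℤ) :=
    mul_dvd_mul_left 2 (by exact_mod_cast dvd_mul_right n m)
  refine ⟨k, hk, ?_, ?_⟩
  · simpa [cos_mul_pi_div_eq_of_modEq hxi] using (hkx.of_dvd hdvd_m).cos_mul_pi_div_eq
  · simpa [cos_mul_pi_div_eq_of_modEq hxj] using (hkx.of_dvd hdvd_n).cos_mul_pi_div_eq

theorem lissajous_nodes_eq_cgl_grid_general (n p : ℕ) (hn : 0 < n)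
    (hcop : Nat.Coprime n (n + p))
    (γ : ℝ → ℝ × ℝ)
    (hγ : ∀ t, γ t = (Real.cos (n * t), Real.cos ((n + p) * t)))
    (tk : ℕ → ℝ) (htk : ∀ k, tk k = k * π / (n * (n + p))) :
    {A : ℝ × ℝ | ∃ k ≤ n * (n + p), A = γ (tk k)} =
      {A : ℝ × ℝ | ∃ i ≤ n + p, ∃ j ≤ n, Even (i + j) ∧
        A = (Real.cos (i * π / (n + p)), Real.cos (j * π / n))} := by
  have hnp : 0 < n + p := by omega
  have hnode : ∀ k : ℕ, γ (tk k) = (cos (k * π / (n + p)), cos (k * π / n)) := by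
    intro k
    rw [hγ, htk]
    congr 1 <;> congr 1 <;> field_simp
  ext A
  simp only [Set.mem_ofPred_eq]
  constructor
  · rintro ⟨k, -, rfl⟩
    obtain ⟨i, hi, j, hj, hij, hi_cos, hj_cos⟩ := exists_even_add_cos_mul_pi_div_eq hnp hn k
    push_cast at hi_cos
    exact ⟨i, hi, j, hj, hij, by rw [hnode, hi_cos, hj_cos]⟩
  · rintro ⟨i, hi, j, hj, hij, rfl⟩
    obtain ⟨k, hk, hi_cos, hj_cos⟩ :=
      exists_le_mul_cos_mul_pi_div_eq_of_even_add hcop.symm hnp hn hij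
    push_cast at hi_cos
    exact ⟨k, hk, by rw [hnode, hi_cos, hj_cos]⟩

theorem lissajous_nodes_eq_cgl_grid (n p : ℕ) (hn : 0 < n) (hp : 0 < p)
    (hcop : Nat.Coprime n (n + p))
    (γ : ℝ → ℝ × ℝ)
    (hγ : ∀ t, γ t = (Real.cos (n * t), Real.cos ((n + p) * t)))
    (tk : ℕ → ℝ) (htk : ∀ k, tk k = k * π / (n * (n + p))) :
    {A : ℝ × ℝ | ∃ k ≤ n * (n + p), A = γ (tk k)} =
      {A : ℝ × ℝ | ∃ i ≤ n + p, ∃ j ≤ n, Even (i + j) ∧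
        A = (Real.cos (i * π / (n + p)), Real.cos (j * π / n))} :=
  lissajous_nodes_eq_cgl_grid_general n p hn hcop γ hγ tk htk
end

section
/- Let n, p be positive integers with gcd(n, n+p) = 1. The curve γ(t) = (cos(nt), cos((n+p)t)), t ∈ [0,π], meets the boundary of the square [−1,1]² (i.e., points where the first coordinate is ±1 or the second coordinate is ±1) at exactly 2n + p distinct points. -/
/-!
A boundary point comes from a parameter `t ∈ [0, π]` with `n t ∈ πℤ` or `m t ∈ πℤ`
(here `m = n + p`). There are `n + 1` parameters of the first kind and `m + 1` of the second,
and by coprimality only `0` and `π` are of both kinds, so there are `n + m` such parameters.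
The curve is injective on them: if `cos (n s) = ±1` and `γ s = γ t`, then `n (t - s)` and
`n (t + s)` both lie in `2πℤ`, while `m (t - ε s) ∈ 2πℤ` for some sign `ε`. Bézout gives
`t - ε s ∈ 2πℤ`, hence `cos s = cos t`, and `s = t` since `cos` is injective on `[0, π]`.
-/

open Real Set

lemma abs_cos_eq_one_iff_sin_eq_zero (x : ℝ) : |cos x| = 1 ↔ sin x = 0 :=
  abs_cos_eq_one_iff.trans sin_eq_zero_iff.symm

lemma sin_eq_zero_iff_cos_two_mul_eq_one (x : ℝ) : sin x = 0 ↔ cos (2 * x) = 1 := by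
  simp [cos_two_mul_eq_one_sub]

lemma cos_eq_cos_iff_cos_sub_eq_one_or_cos_add_eq_one {x y : ℝ} :
    cos x = cos y ↔ cos (y - x) = 1 ∨ cos (y + x) = 1 := by
  simp only [cos_eq_cos_iff, cos_eq_one_iff]
  constructor
  · rintro ⟨k, h | h⟩
    · exact Or.inl ⟨k, by rw [h]; ring⟩
    · exact Or.inr ⟨k, by rw [h]; ring⟩
  · rintro (⟨k, h⟩ | ⟨k, h⟩)
    · exact ⟨k, Or.inl (by linarith)⟩
    · exact ⟨k, Or.inr (by linarith)⟩

lemma cos_eq_one_of_cos_mul_eq_one {n m : ℤ} (hnm : IsCoprime n m) {u : ℝ}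
    (hn : cos (n * u) = 1) (hm : cos (m * u) = 1) : cos u = 1 := by
  obtain ⟨a, b, hab⟩ := hnm
  rw [cos_eq_one_iff] at hn hm ⊢
  obtain ⟨k, hk⟩ := hn
  obtain ⟨l, hl⟩ := hm
  have hab' : (a : ℝ) * n + b * m = 1 := by exact_mod_cast hab
  exact ⟨a * k + b * l, by push_cast; linear_combination a * hk + b * hl + u * hab'⟩

lemma cos_eq_cos_of_sin_mul_eq_zero {n m : ℤ} (hnm : IsCoprime n m) {s t : ℝ}
    (hs : sin (n * s) = 0) (hn : cos (n * s) = cos (n * t)) (hm : cos (m * s) = cos (m * t)) :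
    cos s = cos t := by
  have hsq : cos (n * s) * cos (n * t) = 1 := by rw [← hn, ← sq, cos_sq', hs]; ring
  have hsub : cos (n * (t - s)) = 1 := by rw [mul_sub, cos_sub, hs, mul_comm]; simpa using hsq
  have hadd : cos (n * (t + s)) = 1 := by rw [mul_add, cos_add, hs, mul_comm]; simpa using hsq
  rw [cos_eq_cos_iff_cos_sub_eq_one_or_cos_add_eq_one, ← mul_sub, ← mul_add] at hm
  rw [cos_eq_cos_iff_cos_sub_eq_one_or_cos_add_eq_one]
  exact hm.imp (cos_eq_one_of_cos_mul_eq_one hnm hsub) (cos_eq_one_of_cos_mul_eq_one hnm hadd)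

def cosMulExtrema (n : ℕ) : Set ℝ := {t ∈ Icc 0 π | sin (n * t) = 0}

lemma cosMulExtrema_eq_image {n : ℕ} (hn : 0 < n) :
    cosMulExtrema n = (fun k : ℕ => k * π / n) '' Iic n := by
  have hn' : (0 : ℝ) < n := by exact_mod_cast hn
  ext t
  simp only [cosMulExtrema, mem_ofPred_eq, mem_Icc, sin_eq_zero_iff, mem_image, mem_Iic]
  constructor
  · rintro ⟨⟨ht0, htπ⟩, k, hk⟩
    have hk0 : (0 : ℝ) ≤ k := by nlinarith [pi_pos]
    have hkn : (k : ℝ) ≤ n := by nlinarith [pi_pos]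
    lift k to ℕ using by exact_mod_cast hk0
    refine ⟨k, by exact_mod_cast hkn, ?_⟩
    field_simp
    push_cast at hk
    linarith
  · rintro ⟨k, hk, rfl⟩
    have hkn : (k : ℝ) ≤ n := by exact_mod_cast hk
    refine ⟨⟨by positivity, ?_⟩, k, by push_cast; field_simp⟩
    rw [div_le_iff₀ hn']
    nlinarith [pi_pos]

lemma cosMulExtrema_finite {n : ℕ} (hn : 0 < n) : (cosMulExtrema n).Finite := by
  rw [cosMulExtrema_eq_image hn]
  exact (finite_Iic n).image _

lemma ncard_cosMulExtrema {n : ℕ} (hn : 0 < n) : (cosMulExtrema n).ncard = n + 1 := by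
  have hinj : Function.Injective fun k : ℕ => k * π / n := by
    intro a b h
    have : (n : ℝ) ≠ 0 := by positivity
    simp only [div_left_inj' this, mul_left_inj' pi_ne_zero] at h
    exact_mod_cast h
  rw [cosMulExtrema_eq_image hn, ncard_image_of_injective _ hinj]
  simp

lemma cosMulExtrema_inter {n m : ℕ} (hnm : n.Coprime m) :
    cosMulExtrema n ∩ cosMulExtrema m = cosMulExtrema 1 := by
  have hnm' : IsCoprime (n : ℤ) m := Nat.isCoprime_iff_coprime.2 hnm
  ext t
  simp only [cosMulExtrema, mem_inter_iff, mem_ofPred_eq, Nat.cast_one, one_mul]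
  constructor
  · rintro ⟨⟨ht, hn⟩, -, hm⟩
    refine ⟨ht, (sin_eq_zero_iff_cos_two_mul_eq_one t).2 ?_⟩
    rw [sin_eq_zero_iff_cos_two_mul_eq_one, mul_left_comm] at hn hm
    exact cos_eq_one_of_cos_mul_eq_one hnm' (by exact_mod_cast hn) (by exact_mod_cast hm)
  · rintro ⟨ht, h⟩
    obtain ⟨k, rfl⟩ := sin_eq_zero_iff.1 h
    refine ⟨⟨ht, ?_⟩, ht, ?_⟩ <;>
    · rw [← mul_assoc]
      exact_mod_cast sin_int_mul_pi _

lemma injOn_lissajous {n m : ℕ} (hnm : n.Coprime m) :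
    InjOn (fun t => (cos (n * t), cos (m * t))) (cosMulExtrema n ∪ cosMulExtrema m) := by
  have hnm' : IsCoprime (n : ℤ) m := Nat.isCoprime_iff_coprime.2 hnm
  rintro s hs t ht hst
  simp only [Prod.mk.injEq] at hst
  have hsI : s ∈ Icc 0 π := by rcases hs with h | h <;> exact h.1
  have htI : t ∈ Icc 0 π := by rcases ht with h | h <;> exact h.1
  refine injOn_cos hsI htI ?_
  rcases hs with ⟨-, h⟩ | ⟨-, h⟩
  · exact cos_eq_cos_of_sin_mul_eq_zero hnm' (by exact_mod_cast h) (by exact_mod_cast hst.1)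
      (by exact_mod_cast hst.2)
  · exact cos_eq_cos_of_sin_mul_eq_zero hnm'.symm (by exact_mod_cast h) (by exact_mod_cast hst.2)
      (by exact_mod_cast hst.1)

theorem ncard_lissajous_boundary {n m : ℕ} (hn : 0 < n) (hm : 0 < m) (hnm : n.Coprime m) :
    {A : ℝ × ℝ | A ∈ (fun t => (cos (n * t), cos (m * t))) '' Icc 0 π ∧
      (|A.1| = 1 ∨ |A.2| = 1)}.ncard = n + m := by
  have hB : {A : ℝ × ℝ | A ∈ (fun t => (cos (n * t), cos (m * t))) '' Icc 0 π ∧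
      (|A.1| = 1 ∨ |A.2| = 1)} =
      (fun t => (cos (n * t), cos (m * t))) '' (cosMulExtrema n ∪ cosMulExtrema m) := by
    change _ '' _ ∩ {A : ℝ × ℝ | |A.1| = 1 ∨ |A.2| = 1} = _
    rw [← image_inter_preimage]
    congr 1
    ext t
    simp only [cosMulExtrema, mem_inter_iff, mem_preimage, mem_ofPred_eq, mem_union,
      abs_cos_eq_one_iff_sin_eq_zero]
    tauto
  have hcard := ncard_union_add_ncard_inter _ _ (cosMulExtrema_finite hn) (cosMulExtrema_finite hm)
  rw [cosMulExtrema_inter hnm, ncard_cosMulExtrema hn, ncard_cosMulExtrema hm,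
    ncard_cosMulExtrema one_pos] at hcard
  rw [hB, (injOn_lissajous hnm).ncard_image]
  omega

theorem lissajous_boundary_points_card_general (n p : ℕ) (hn : 0 < n)
    (hcop : Nat.Coprime n (n + p))
    (γ : ℝ → ℝ × ℝ)
    (hγ : ∀ t, γ t = (Real.cos (n * t), Real.cos ((n + p) * t))) :
    Set.ncard {A : ℝ × ℝ | A ∈ γ '' Set.Icc 0 π ∧ (|A.1| = 1 ∨ |A.2| = 1)} =
      2 * n + p := by
  have hγ' : γ = fun t => (cos (n * t), cos (((n + p : ℕ) : ℝ) * t)) := by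
    funext t
    rw [hγ]
    push_cast
    rfl
  rw [hγ', ncard_lissajous_boundary hn (by omega) hcop]
  ring

theorem lissajous_boundary_points_card (n p : ℕ) (hn : 0 < n) (hp : 0 < p)
    (hcop : Nat.Coprime n (n + p))
    (γ : ℝ → ℝ × ℝ)
    (hγ : ∀ t, γ t = (Real.cos (n * t), Real.cos ((n + p) * t))) :
    Set.ncard {A : ℝ × ℝ | A ∈ γ '' Set.Icc 0 π ∧ (|A.1| = 1 ∨ |A.2| = 1)} =
      2 * n + p :=
  lissajous_boundary_points_card_general n p hn hcop γ hγ
end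

section
/- Let P(x,y) be a bivariate polynomial that is orthogonal to T_{k(n+p)}(x)·T_{kn}(y) for all k ∈ ℕ with respect to the product Chebyshev weight on [−1,1]². Then (1/π²)∫∫_{[−1,1]²} P(x,y)(1−x²)^{−1/2}(1−y²)^{−1/2} dx dy = (1/π)∫₀^π P(cos(nt), cos((n+p)t)) dt. -/
/-!
Expand `P` in the tensor Chebyshev basis, `P x y = ∑ c i j * T_i x * T_j y`. By orthogonality the
left side is `c 0 0`, and the hypothesis says exactly that `c (k(n+p)) (kn) = 0` for `k ≥ 1`.
Along the Lissajous curve `T_i (cos nt) * T_j (cos (n+p)t) = cos (int) * cos (j(n+p)t)`, whose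
mean over `[0, π]` vanishes unless `in = j(n+p)`; by coprimality this forces
`(i, j) = (k(n+p), kn)`, so only `c 0 0` survives on the right side as well.
-/

open Real MeasureTheory Polynomial.Chebyshev Submodule Set

lemma Nat.Coprime.exists_eq_mul_of_mul_eq_mul {a b i j : ℕ} (hab : a.Coprime b)
    (h : i * a = j * b) : ∃ k, i = k * b ∧ j = k * a := by
  obtain ⟨k, rfl⟩ : b ∣ i := hab.symm.dvd_of_dvd_mul_right ⟨j, by rw [h, mul_comm]⟩
  rcases b.eq_zero_or_pos with rfl | hb
  · exact ⟨j, by simp, by simp [(Nat.coprime_zero_right a).1 hab]⟩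
  · exact ⟨k, mul_comm b k, Nat.eq_of_mul_eq_mul_right hb (by linarith)⟩

lemma integral_div_sqrt_one_sub_sq (f : ℝ → ℝ) :
    ∫ x in (-1 : ℝ)..1, f x / √(1 - x ^ 2) = ∫ x, f x ∂measureT := by
  simp only [integral_measureT, div_eq_mul_inv, Real.sqrt_inv]

lemma integral_integral_div_sqrt_mul_sqrt (f : ℝ → ℝ → ℝ) :
    ∫ x in (-1 : ℝ)..1, ∫ y in (-1 : ℝ)..1, f x y / (√(1 - x ^ 2) * √(1 - y ^ 2)) =
      ∫ x, ∫ y, f x y ∂measureT ∂measureT := by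
  have (x y : ℝ) :
      f x y / (√(1 - x ^ 2) * √(1 - y ^ 2)) = f x y / √(1 - y ^ 2) / √(1 - x ^ 2) := by
    rw [div_div, mul_comm]
  simp_rw [this, intervalIntegral.integral_div, integral_div_sqrt_one_sub_sq]

noncomputable def chebyshevGram (i j : ℕ) : ℝ :=
  if i = j then (if i = 0 then 1 else 1 / 2) else 0

lemma chebyshevGram_of_ne {i j : ℕ} (h : i ≠ j) : chebyshevGram i j = 0 := if_neg h

lemma chebyshevGram_self_ne_zero (i : ℕ) : chebyshevGram i i ≠ 0 := by
  simp only [chebyshevGram]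
  split_ifs <;> norm_num

lemma integral_eval_T_mul_eval_T_measureT (i j : ℕ) :
    ∫ x, (T ℝ i).eval x * (T ℝ j).eval x ∂measureT = π * chebyshevGram i j := by
  rcases eq_or_ne i j with rfl | hij
  · rcases eq_or_ne i 0 with rfl | hi
    · simpa [chebyshevGram] using integral_eval_T_real_mul_self_measureT_zero
    · simp [chebyshevGram, hi, integral_T_real_mul_self_measureT_of_ne_zero hi, div_eq_mul_inv]
  · simp [chebyshevGram_of_ne hij, integral_eval_T_real_mul_eval_T_real_measureT_of_ne hij]

noncomputable def chebyshevProd (ij : ℕ × ℕ) (x y : ℝ) : ℝ :=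
  (T ℝ ij.1).eval x * (T ℝ ij.2).eval y

lemma mul_eval_T (n : ℤ) (x : ℝ) :
    x * (T ℝ n).eval x = ((T ℝ (n + 1)).eval x + (T ℝ (n - 1)).eval x) / 2 := by
  rw [T_add_one]
  simp only [Polynomial.eval_sub, Polynomial.eval_mul, Polynomial.eval_ofNat, Polynomial.eval_X,
    sub_add_cancel]
  ring

lemma mul_eval_T_natCast (i : ℕ) (x : ℝ) :
    x * (T ℝ i).eval x =
      2⁻¹ * (T ℝ ↑(i + 1)).eval x + 2⁻¹ * (T ℝ ((i : ℤ) - 1).natAbs).eval x := by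
  rw [mul_eval_T, T_natAbs]
  push_cast
  ring

lemma fst_mul_mem_span_chebyshevProd {f : ℝ → ℝ → ℝ}
    (hf : f ∈ span ℝ (range chebyshevProd)) :
    (fun x y => x * f x y) ∈ span ℝ (range chebyshevProd) := by
  refine (span_le (p := (span ℝ (range chebyshevProd)).comap
    (LinearMap.mulLeft ℝ fun x _ => x))).2 ?_ hf
  rintro _ ⟨⟨i, j⟩, rfl⟩
  have : (fun x _ => x) * chebyshevProd (i, j) = (2⁻¹ : ℝ) • chebyshevProd (i + 1, j) +
      (2⁻¹ : ℝ) • chebyshevProd (((i : ℤ) - 1).natAbs, j) := by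
    ext x y
    simp only [Pi.mul_apply, Pi.add_apply, Pi.smul_apply, chebyshevProd, smul_eq_mul,
      ← mul_assoc, mul_eval_T_natCast]
    ring
  rw [SetLike.mem_coe, mem_comap, LinearMap.mulLeft_apply, this]
  exact add_mem (smul_mem _ _ (subset_span ⟨_, rfl⟩)) (smul_mem _ _ (subset_span ⟨_, rfl⟩))

lemma snd_mul_mem_span_chebyshevProd {f : ℝ → ℝ → ℝ}
    (hf : f ∈ span ℝ (range chebyshevProd)) :
    (fun x y => y * f x y) ∈ span ℝ (range chebyshevProd) := by
  refine (span_le (p := (span ℝ (range chebyshevProd)).comap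
    (LinearMap.mulLeft ℝ fun _ y => y))).2 ?_ hf
  rintro _ ⟨⟨i, j⟩, rfl⟩
  have : (fun _ y => y) * chebyshevProd (i, j) = (2⁻¹ : ℝ) • chebyshevProd (i, j + 1) +
      (2⁻¹ : ℝ) • chebyshevProd (i, ((j : ℤ) - 1).natAbs) := by
    ext x y
    simp only [Pi.mul_apply, Pi.add_apply, Pi.smul_apply, chebyshevProd, smul_eq_mul]
    rw [mul_left_comm, mul_eval_T_natCast]
    ring
  rw [SetLike.mem_coe, mem_comap, LinearMap.mulLeft_apply, this]
  exact add_mem (smul_mem _ _ (subset_span ⟨_, rfl⟩)) (smul_mem _ _ (subset_span ⟨_, rfl⟩))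

lemma eval_mem_span_chebyshevProd (Q : MvPolynomial (Fin 2) ℝ) :
    (fun x y => MvPolynomial.eval ![x, y] Q) ∈ span ℝ (range chebyshevProd) := by
  induction Q using MvPolynomial.induction_on with
  | C a =>
    convert smul_mem _ a (subset_span (mem_range_self (0, 0))) using 1
    ext x y
    simp [chebyshevProd]
  | add p q hp hq =>
    simp only [map_add]
    exact add_mem hp hq
  | mul_X p i hp =>
    fin_cases i
    · simpa [mul_comm] using fst_mul_mem_span_chebyshevProd hp
    · simpa [mul_comm] using snd_mul_mem_span_chebyshevProd hp

lemma integral_chebyshevProd_mul (ij kl : ℕ × ℕ) (x : ℝ) :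
    ∫ y, chebyshevProd ij x y * chebyshevProd kl x y ∂measureT =
      (T ℝ ij.1).eval x * (T ℝ kl.1).eval x * (π * chebyshevGram ij.2 kl.2) := by
  simp_rw [chebyshevProd, mul_mul_mul_comm, integral_const_mul,
    integral_eval_T_mul_eval_T_measureT]
  ring

lemma integral_integral_sum_chebyshevProd_mul (c : ℕ × ℕ →₀ ℝ) (kl : ℕ × ℕ) :
    ∫ x, ∫ y, (c.sum fun ij a => a • chebyshevProd ij) x y * chebyshevProd kl x y
      ∂measureT ∂measureT =
      π ^ 2 * c kl * (chebyshevGram kl.1 kl.1 * chebyshevGram kl.2 kl.2) := by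
  simp only [Finsupp.sum, Finset.sum_apply, Pi.smul_apply, smul_eq_mul, Finset.sum_mul,
    mul_assoc]
  rw [integral_congr_ae (Filter.Eventually.of_forall fun x => integral_finsetSum _ fun ij _ =>
    (integrable_measureT (by unfold chebyshevProd; fun_prop)).const_mul _)]
  simp_rw [integral_const_mul, integral_chebyshevProd_mul]
  rw [integral_finsetSum _ fun ij _ => (integrable_measureT (by fun_prop)).const_mul _]
  simp_rw [integral_const_mul, integral_mul_const, integral_eval_T_mul_eval_T_measureT]
  rw [Finset.sum_eq_single kl]
  · ring
  · intro ij _ hne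
    rcases not_and_or.1 (Prod.ext_iff.not.1 hne) with h | h <;> simp [chebyshevGram_of_ne h]
  · intro h
    simp [Finsupp.notMem_support_iff.1 h]

lemma integral_integral_sum_chebyshevProd_mul_div (c : ℕ × ℕ →₀ ℝ) (K L : ℕ) :
    ∫ x in (-1 : ℝ)..1, ∫ y in (-1 : ℝ)..1, (c.sum fun ij a => a • chebyshevProd ij) x y *
      (T ℝ K).eval x * (T ℝ L).eval y / (√(1 - x ^ 2) * √(1 - y ^ 2)) =
      π ^ 2 * c (K, L) * (chebyshevGram K K * chebyshevGram L L) := by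
  simp_rw [mul_assoc _ ((T ℝ _).eval _)]
  rw [integral_integral_div_sqrt_mul_sqrt]
  exact integral_integral_sum_chebyshevProd_mul c (K, L)

lemma chebyshevProd_cos_mul_cos_mul (ij : ℕ × ℕ) (a b : ℕ) (t : ℝ) :
    chebyshevProd ij (cos (a * t)) (cos (b * t)) =
      (T ℝ ↑(ij.1 * a)).eval (cos t) * (T ℝ ↑(ij.2 * b)).eval (cos t) := by
  simp only [chebyshevProd, T_real_cos]
  push_cast
  ring_nf

lemma integral_sum_chebyshevProd_cos_mul_cos_mul (c : ℕ × ℕ →₀ ℝ) (a b : ℕ) :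
    ∫ t in 0..π, (c.sum fun ij z => z • chebyshevProd ij) (cos (a * t)) (cos (b * t)) =
      π * c.sum fun ij z => z * chebyshevGram (ij.1 * a) (ij.2 * b) := by
  simp only [Finsupp.sum, Finset.sum_apply, Pi.smul_apply, smul_eq_mul,
    chebyshevProd_cos_mul_cos_mul, Finset.mul_sum]
  rw [← integral_measureT_eq_integral_cos (f := fun x => ∑ ij ∈ c.support,
      c ij * ((T ℝ ↑(ij.1 * a)).eval x * (T ℝ ↑(ij.2 * b)).eval x)),
    integral_finsetSum _ fun ij _ => (integrable_measureT (by fun_prop)).const_mul _]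
  simp_rw [integral_const_mul, integral_eval_T_mul_eval_T_measureT]
  congr 1 with ij
  ring

lemma sum_mul_chebyshevGram_mul_mul_of_coprime (c : ℕ × ℕ →₀ ℝ) {a b : ℕ}
    (hab : a.Coprime b) (hc : ∀ k, 1 ≤ k → c (k * b, k * a) = 0) :
    (c.sum fun ij z => z * chebyshevGram (ij.1 * a) (ij.2 * b)) = c (0, 0) := by
  rw [Finsupp.sum, Finset.sum_eq_single (0, 0)]
  · simp [chebyshevGram]
  · rintro ⟨i, j⟩ _ hij
    by_cases h : i * a = j * b
    · obtain ⟨k, rfl, rfl⟩ := hab.exists_eq_mul_of_mul_eq_mul h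
      have hk : 1 ≤ k := Nat.one_le_iff_ne_zero.2 fun hk => hij (by simp [hk])
      simp [hc k hk]
    · simp [chebyshevGram_of_ne h]
  · intro h
    simp [Finsupp.notMem_support_iff.1 h]

theorem integral_2D_to_1D_on_lissajous_general (n p : ℕ)
    (hcop : Nat.Coprime n (n + p)) (P : ℝ → ℝ → ℝ)
    (hpoly : ∃ Q : MvPolynomial (Fin 2) ℝ, ∀ x y, P x y = MvPolynomial.eval ![x, y] Q)
    (horth : ∀ k : ℕ, 1 ≤ k →
      (1 / π ^ 2) * ∫ x in (-1 : ℝ)..1, ∫ y in (-1 : ℝ)..1,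
        P x y * (Polynomial.Chebyshev.T ℝ (k * (n + p))).eval x *
          (Polynomial.Chebyshev.T ℝ (k * n)).eval y /
            (Real.sqrt (1 - x ^ 2) * Real.sqrt (1 - y ^ 2)) = 0) :
    (1 / π ^ 2) * ∫ x in (-1 : ℝ)..1, ∫ y in (-1 : ℝ)..1,
        P x y / (Real.sqrt (1 - x ^ 2) * Real.sqrt (1 - y ^ 2)) =
      (1 / π) * ∫ t in (0 : ℝ)..π, P (Real.cos (n * t)) (Real.cos ((n + p) * t)) := by
  obtain ⟨Q, hQ⟩ := hpoly
  obtain ⟨c, hc⟩ := Finsupp.mem_span_range_iff_exists_finsupp.1 (eval_mem_span_chebyshevProd Q)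
  obtain rfl : P = c.sum fun ij a => a • chebyshevProd ij := by
    rw [hc]
    funext x y
    exact hQ x y
  have hcoeff (k : ℕ) (hk : 1 ≤ k) : c (k * (n + p), k * n) = 0 := by
    have h := integral_integral_sum_chebyshevProd_mul_div c (k * (n + p)) (k * n)
    push_cast at h
    simpa [h, pi_ne_zero, chebyshevGram_self_ne_zero] using horth k hk
  have hlhs := integral_integral_sum_chebyshevProd_mul_div c 0 0
  simp only [Nat.cast_zero, T_zero, Polynomial.eval_one, mul_one] at hlhs
  have hrhs := integral_sum_chebyshevProd_cos_mul_cos_mul c n (n + p)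
  push_cast at hrhs
  rw [hlhs, hrhs, sum_mul_chebyshevGram_mul_mul_of_coprime c hcop hcoeff]
  simp [chebyshevGram, pi_ne_zero]

theorem integral_2D_to_1D_on_lissajous (n p : ℕ) (hn : 0 < n) (hp : 0 < p)
    (hcop : Nat.Coprime n (n + p)) (P : ℝ → ℝ → ℝ)
    (hpoly : ∃ Q : MvPolynomial (Fin 2) ℝ, ∀ x y, P x y = MvPolynomial.eval ![x, y] Q)
    (horth : ∀ k : ℕ, 1 ≤ k →
      (1 / π ^ 2) * ∫ x in (-1 : ℝ)..1, ∫ y in (-1 : ℝ)..1,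
        P x y * (Polynomial.Chebyshev.T ℝ (k * (n + p))).eval x *
          (Polynomial.Chebyshev.T ℝ (k * n)).eval y /
            (Real.sqrt (1 - x ^ 2) * Real.sqrt (1 - y ^ 2)) = 0) :
    (1 / π ^ 2) * ∫ x in (-1 : ℝ)..1, ∫ y in (-1 : ℝ)..1,
        P x y / (Real.sqrt (1 - x ^ 2) * Real.sqrt (1 - y ^ 2)) =
      (1 / π) * ∫ t in (0 : ℝ)..π, P (Real.cos (n * t)) (Real.cos ((n + p) * t)) :=
  integral_2D_to_1D_on_lissajous_general n p hcop P hpoly horth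
end

section
/- Let n, p be positive integers with gcd(n, n+p) = 1. The functions e_{i,j}(t) = T̂_i(cos(nt))·T̂_j(cos((n+p)t)) indexed by (i,j) ∈ Γ_{n,p}^L = {(i,j) ∈ ℕ₀² : i/(n+p) + j/n < 1} ∪ {(0,n)} form an orthonormal system in L²([0,π]) with inner product (1/π)∫₀^π q₁(t)q₂(t) dt. -/
/-!
Since `T_m (cos θ) = cos (m θ)`, `e i j t = c_i c_j cos (i n t) cos (j (n + p) t)` with `c_0 = 1`
and `c_m = √2` otherwise. Expanding the product of four cosines, the inner product of `e i j` and
`e i' j'` is a combination of the integrals `∫₀^π cos (u n t) cos (v (n + p) t) dt` with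
`u = i ± i'` and `v = j ± j'`, which vanish unless `u n = ± v (n + p)`. By coprimality this
forces `n + p ∣ u` and `n ∣ v`, and on the index set `i + i' < n + p` or `j + j' < n`, so only
`u = v = 0` survives; the weights `c` are exactly what normalises these surviving terms.
-/

open Real intervalIntegral

theorem integral_cos_int_mul (k : ℤ) :
    ∫ t in (0 : ℝ)..π, cos (k * t) = if k = 0 then π else 0 := by
  split_ifs with hk
  · simp [hk]
  · rw [integral_comp_mul_left _ (Int.cast_ne_zero.mpr hk)]
    simp [integral_cos, sin_int_mul_pi]

theorem integral_cos_int_mul_mul_cos_int_mul (a b : ℤ) :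
    ∫ t in (0 : ℝ)..π, cos (a * t) * cos (b * t) =
      π / 2 * ((if a = b then 1 else 0) + if a = -b then 1 else 0) := by
  have hcont (k : ℤ) : Continuous fun t : ℝ ↦ cos (k * t) := by fun_prop
  have hsum (t : ℝ) : cos (a * t) * cos (b * t) =
      (cos (((a - b : ℤ) : ℝ) * t) + cos (((a + b : ℤ) : ℝ) * t)) / 2 := by
    push_cast
    rw [sub_mul, add_mul, ← two_mul_cos_mul_cos]
    ring
  simp_rw [hsum, integral_div]
  rw [integral_add ((hcont _).intervalIntegrable _ _) ((hcont _).intervalIntegrable _ _),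
    integral_cos_int_mul, integral_cos_int_mul]
  simp only [sub_eq_zero, add_eq_zero_iff_eq_neg]
  split_ifs <;> ring

theorem Int.eq_zero_and_eq_zero_of_mul_eq_mul {N M u v : ℤ} (hNM : IsCoprime N M)
    (huv : u * N = v * M) (h : |u| < M ∨ |v| < N) : u = 0 ∧ v = 0 := by
  rcases h with hu | hv
  · have hu0 : u = 0 :=
      Int.eq_zero_of_abs_lt_dvd (hNM.symm.dvd_of_dvd_mul_right ⟨v, by linarith⟩) hu
    subst hu0
    have hM : M ≠ 0 := by positivity
    simpa [hM] using huv.symm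
  · have hv0 : v = 0 :=
      Int.eq_zero_of_abs_lt_dvd (hNM.dvd_of_dvd_mul_right ⟨u, by linarith⟩) hv
    subst hv0
    have hN : N ≠ 0 := by positivity
    simpa [hN] using huv

theorem integral_cos_mul_cos_of_isCoprime {N M u v : ℤ} (hNM : IsCoprime N M)
    (h : |u| < M ∨ |v| < N) :
    ∫ t in (0 : ℝ)..π, cos (u * (N * t)) * cos (v * (M * t)) =
      π * ((if u = 0 then 1 else 0) * if v = 0 then 1 else 0) := by
  have hresonance (w : ℤ) (hw : |u| < M ∨ |w| < N) : u * N = w * M ↔ u = 0 ∧ w = 0 :=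
    ⟨fun huw ↦ Int.eq_zero_and_eq_zero_of_mul_eq_mul hNM huw hw,
      fun ⟨hu, hw⟩ ↦ by simp [hu, hw]⟩
  have hfreq (t : ℝ) : cos (u * (N * t)) * cos (v * (M * t)) =
      cos (((u * N : ℤ) : ℝ) * t) * cos (((v * M : ℤ) : ℝ) * t) := by
    push_cast; ring_nf
  simp_rw [hfreq, integral_cos_int_mul_mul_cos_int_mul, ← neg_mul,
    hresonance v h, hresonance (-v) (by rwa [abs_neg]), neg_eq_zero, ite_zero_mul_ite_zero]
  split_ifs <;> ring

def gammaL (n p : ℕ) : Set (ℕ × ℕ) :=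
  {ij | (ij.1 : ℝ) / (n + p) + (ij.2 : ℝ) / n < 1 ∨ ij = (0, n)}

theorem add_lt_or_add_lt_of_mem_gammaL {n p i j i' j' : ℕ} (hn : 0 < n)
    (hij : (i, j) ∈ gammaL n p) (hij' : (i', j') ∈ gammaL n p) :
    i + i' < n + p ∨ j + j' < n := by
  have hM : (0 : ℝ) < n + p := by positivity
  have hN : (0 : ℝ) < n := by exact_mod_cast hn
  have fst_lt {a b : ℕ} (h : (a : ℝ) / (n + p) + (b : ℝ) / n < 1) : a < n + p := by
    have : (a : ℝ) / (n + p) < 1 := by linarith [div_nonneg b.cast_nonneg hN.le]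
    exact_mod_cast (div_lt_one hM).mp this
  rcases hij with hij | ⟨⟨⟩⟩ <;> rcases hij' with hij' | ⟨⟨⟩⟩
  · by_contra! hge
    have hi : (1 : ℝ) ≤ (i + i') / (n + p) := by
      rw [one_le_div hM]; exact_mod_cast hge.1
    have hj : (1 : ℝ) ≤ (j + j') / n := by
      rw [one_le_div hN]; exact_mod_cast hge.2
    rw [add_div] at hi hj
    linarith
  · left; simpa using fst_lt hij
  · left; simpa using fst_lt hij'
  · left; omega

theorem integral_cos_mul_cos_mul_cos_mul_cos_of_coprime {N M a a' b b' : ℕ}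
    (hNM : N.Coprime M) (h : a + a' < M ∨ b + b' < N) :
    ∫ t in (0 : ℝ)..π, cos (a * (N * t)) * cos (a' * (N * t)) *
        (cos (b * (M * t)) * cos (b' * (M * t))) =
      π / 4 * (((if a = a' then 1 else 0) + if a + a' = 0 then 1 else 0) *
        ((if b = b' then 1 else 0) + if b + b' = 0 then 1 else 0)) := by
  set c : ℤ → ℤ → ℝ → ℝ := fun u v t ↦ cos (u * ((N : ℤ) * t)) * cos (v * ((M : ℤ) * t))
  have hc (u v : ℤ) (hu : |u| ≤ a + a') (hv : |v| ≤ b + b') :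
      ∫ t in (0 : ℝ)..π, c u v t = π * ((if u = 0 then 1 else 0) * if v = 0 then 1 else 0) :=
    integral_cos_mul_cos_of_isCoprime (Nat.isCoprime_iff_coprime.mpr hNM) (by omega)
  have hint (u v : ℤ) : IntervalIntegrable (c u v) MeasureTheory.volume 0 π := by
    apply Continuous.intervalIntegrable; fun_prop
  have hsum (t : ℝ) : cos (a * (N * t)) * cos (a' * (N * t)) *
      (cos (b * (M * t)) * cos (b' * (M * t))) =
      (c (a - a') (b - b') t + c (a - a') (b + b') t +
        (c (a + a') (b - b') t + c (a + a') (b + b') t)) / 4 := by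
    simp only [c]
    push_cast
    simp only [sub_mul, add_mul, cos_sub, cos_add]
    ring
  simp_rw [hsum, integral_div]
  rw [integral_add ((hint _ _).add (hint _ _)) ((hint _ _).add (hint _ _)),
    integral_add (hint _ _) (hint _ _), integral_add (hint _ _) (hint _ _), hc, hc, hc, hc]
  · simp only [sub_eq_zero, Nat.cast_inj, ← Nat.cast_add, Nat.cast_eq_zero]
    ring
  all_goals exact abs_le.mpr ⟨by omega, by omega⟩

noncomputable def chebyshevWeight (m : ℕ) : ℝ := if m = 0 then 1 else √2

theorem chebyshevHat_cos (m : ℕ) (x : ℝ) :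
    (if m = 0 then 1 else √2 * (Polynomial.Chebyshev.T ℝ m).eval (cos x)) =
      chebyshevWeight m * cos (m * x) := by
  by_cases hm : m = 0 <;> simp [chebyshevWeight, hm]

theorem chebyshevWeight_mul_chebyshevWeight (a a' : ℕ) :
    chebyshevWeight a * chebyshevWeight a' *
        ((if a = a' then 1 else 0) + if a + a' = 0 then 1 else 0) =
      2 * if a = a' then 1 else 0 := by
  by_cases h : a = a'
  · subst h
    by_cases ha : a = 0 <;> simp [chebyshevWeight, ha]
    norm_num
  · rw [if_neg h, if_neg (by omega : a + a' ≠ 0)]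
    ring

theorem basis_functions_orthonormal_general (n p : ℕ) (hn : 0 < n)
    (hcop : Nat.Coprime n (n + p))
    (That : ℕ → ℝ → ℝ)
    (hThat : ∀ m x, That m x =
      if m = 0 then 1 else Real.sqrt 2 * (Polynomial.Chebyshev.T ℝ m).eval x)
    (e : ℕ → ℕ → ℝ → ℝ)
    (he : ∀ i j t, e i j t = That i (Real.cos (n * t)) * That j (Real.cos ((n + p) * t)))
    (i j i' j' : ℕ)
    (hij : (i : ℝ) / (n + p) + (j : ℝ) / n < 1 ∨ (i, j) = (0, n))
    (hij' : (i' : ℝ) / (n + p) + (j' : ℝ) / n < 1 ∨ (i', j') = (0, n)) :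
    (1 / π) * ∫ t in (0 : ℝ)..π, e i j t * e i' j' t =
      if (i, j) = (i', j') then 1 else 0 := by
  set w := chebyshevWeight
  have hprod (t : ℝ) : e i j t * e i' j' t = w i * w i' * (w j * w j') *
      (cos (i * (n * t)) * cos (i' * (n * t)) *
        (cos (j * ((n + p : ℕ) * t)) * cos (j' * ((n + p : ℕ) * t)))) := by
    simp only [he, hThat, chebyshevHat_cos]
    push_cast
    ring
  have hfreq := add_lt_or_add_lt_of_mem_gammaL hn hij hij'
  rw [integral_congr fun t _ ↦ hprod t, integral_const_mul,
    integral_cos_mul_cos_mul_cos_mul_cos_of_coprime hcop hfreq]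
  calc 1 / π * (w i * w i' * (w j * w j') * (π / 4 * (((if i = i' then 1 else 0) +
        if i + i' = 0 then 1 else 0) * ((if j = j' then 1 else 0) + if j + j' = 0 then 1 else 0))))
      = (w i * w i' * ((if i = i' then 1 else 0) + if i + i' = 0 then 1 else 0)) *
          (w j * w j' * ((if j = j' then 1 else 0) + if j + j' = 0 then 1 else 0)) / 4 := by
        field_simp
    _ = if (i, j) = (i', j') then 1 else 0 := by
        rw [chebyshevWeight_mul_chebyshevWeight, chebyshevWeight_mul_chebyshevWeight]
        simp only [Prod.mk.injEq, ite_and]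
        split_ifs <;> ring

theorem basis_functions_orthonormal (n p : ℕ) (hn : 0 < n) (hp : 0 < p)
    (hcop : Nat.Coprime n (n + p))
    (That : ℕ → ℝ → ℝ)
    (hThat : ∀ m x, That m x =
      if m = 0 then 1 else Real.sqrt 2 * (Polynomial.Chebyshev.T ℝ m).eval x)
    (e : ℕ → ℕ → ℝ → ℝ)
    (he : ∀ i j t, e i j t = That i (Real.cos (n * t)) * That j (Real.cos ((n + p) * t)))
    (i j i' j' : ℕ)
    (hij : (i : ℝ) / (n + p) + (j : ℝ) / n < 1 ∨ (i, j) = (0, n))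
    (hij' : (i' : ℝ) / (n + p) + (j' : ℝ) / n < 1 ∨ (i', j') = (0, n)) :
    (1 / π) * ∫ t in (0 : ℝ)..π, e i j t * e i' j' t =
      if (i, j) = (i', j') then 1 else 0 :=
  basis_functions_orthonormal_general n p hn hcop That hThat e he i j i' j' hij hij'
end
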